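/- arXiv:1508.07605 — 3 statements merged into one kernel-verified Lean document; each statement's English description precedes it below -/
import Mathlib

section
/- Let n be a positive integer and let A be an invertible matrix in M_n(ℝ) such that every entry of A and every entry of A⁻¹ is nonnegative. Then there exist a permutation σ of {1,…,n} and a diagonal matrix D with strictly positive diagonal entries such that A = D·U(σ). -/
/-!
If `A * B = 1 = B * A` with `A, B` entrywise nonnegative, then `A i k > 0` and `B k j > 0` force
`i = j`, because the single term `A i k * B k j` is bounded by the off-diagonal entry `(A * B) i j`.
Each diagonal entry `(A * B) i i = 1` supplies some `k = σ i` with `A i σ(i) > 0` and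
`B σ(i) i > 0`; the sign pattern then makes `σ` injective and forces every other entry of row `i`
of `A` to vanish, so `A` is a positive diagonal matrix times the permutation matrix of `σ`.
-/

open Finset

namespace Matrix

variable {n R : Type*} [Fintype n] [DecidableEq n] [Semiring R] {A : Matrix n n R}

lemma eq_diagonal_mul_of_apply_eq_zero (σ : n → n) (hσ : ∀ i j, j ≠ σ i → A i j = 0) :
    A = diagonal (fun i => A i (σ i)) * of (fun i j => if j = σ i then (1 : R) else 0) := by
  ext i j
  rw [diagonal_mul, of_apply]
  split_ifs with hj
  · rw [hj, mul_one]
  · rw [mul_zero, hσ i j hj]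

variable [LinearOrder R] [IsStrictOrderedRing R] {B : Matrix n n R}

lemma eq_of_mul_eq_one_of_pos_of_pos (hAB : A * B = 1)
    (hA : ∀ i j, 0 ≤ A i j) (hB : ∀ i j, 0 ≤ B i j)
    {i k j : n} (hik : 0 < A i k) (hkj : 0 < B k j) : i = j := by
  by_contra hij
  have hle : A i k * B k j ≤ (A * B) i j :=
    single_le_sum (fun l _ => mul_nonneg (hA i l) (hB l j)) (mem_univ k)
  rw [hAB, one_apply_ne hij] at hle
  exact (mul_pos hik hkj).not_ge hle

lemma exists_pos_pos_of_mul_eq_one (hAB : A * B = 1)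
    (hA : ∀ i j, 0 ≤ A i j) (hB : ∀ i j, 0 ≤ B i j) (i : n) :
    ∃ k, 0 < A i k ∧ 0 < B k i := by
  have hsum : ∑ _k : n, (0 : R) < ∑ k, A i k * B k i := by
    rw [sum_const_zero, ← mul_apply, hAB, one_apply_eq]
    exact zero_lt_one
  obtain ⟨k, -, hk⟩ := exists_lt_of_sum_lt hsum
  exact ⟨k, (hA i k).lt_of_ne fun h => by simp [← h] at hk,
    (hB k i).lt_of_ne fun h => by simp [← h] at hk⟩

theorem exists_perm_eq_diagonal_mul_of_nonneg (hAB : A * B = 1) (hBA : B * A = 1)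
    (hA : ∀ i j, 0 ≤ A i j) (hB : ∀ i j, 0 ≤ B i j) :
    ∃ (σ : Equiv.Perm n) (d : n → R), (∀ i, 0 < d i) ∧
      A = diagonal d * of (fun i j => if j = σ i then (1 : R) else 0) := by
  choose σ hAσ hBσ using exists_pos_pos_of_mul_eq_one hAB hA hB
  have hinj : Function.Injective σ := fun i i' h =>
    (eq_of_mul_eq_one_of_pos_of_pos hAB hA hB (hAσ i') (h ▸ hBσ i)).symm
  have hzero : ∀ i j, j ≠ σ i → A i j = 0 := by
    intro i j hj
    refine ((hA i j).lt_or_eq.resolve_left fun hij => hj ?_).symm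
    obtain ⟨m, hjm, hmj⟩ := exists_pos_pos_of_mul_eq_one hBA hB hA j
    obtain rfl : i = m := eq_of_mul_eq_one_of_pos_of_pos hAB hA hB hij hjm
    exact eq_of_mul_eq_one_of_pos_of_pos hBA hB hA hjm (hAσ i)
  exact ⟨Equiv.ofBijective σ (Finite.injective_iff_bijective.mp hinj), fun i => A i (σ i), hAσ,
    eq_diagonal_mul_of_apply_eq_zero σ hzero⟩

end Matrix

theorem stmt1_general (n : ℕ) (A : Matrix (Fin n) (Fin n) ℝ)
    (hA : IsUnit A)
    (hApos : ∀ i j, 0 ≤ A i j) (hAinvpos : ∀ i j, 0 ≤ A⁻¹ i j) :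
    ∃ (σ : Equiv.Perm (Fin n)) (d : Fin n → ℝ), (∀ i, 0 < d i) ∧
      A = Matrix.diagonal d *
        Matrix.of (fun i j => if j = σ i then (1 : ℝ) else 0) := by
  have hdet : IsUnit A.det := (Matrix.isUnit_iff_isUnit_det A).mp hA
  exact Matrix.exists_perm_eq_diagonal_mul_of_nonneg (Matrix.mul_nonsing_inv A hdet)
    (Matrix.nonsing_inv_mul A hdet) hApos hAinvpos

/-- An invertible real matrix `A` with nonnegative entries whose inverse also has nonnegative
entries factors as `A = D * U(σ)` where `D` is diagonal with strictly positive diagonal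
entries and `U(σ)` is the permutation matrix with `U(σ) i j = 1` iff `j = σ i`. -/
theorem stmt1 (n : ℕ) (hn : 0 < n) (A : Matrix (Fin n) (Fin n) ℝ)
    (hA : IsUnit A)
    (hApos : ∀ i j, 0 ≤ A i j) (hAinvpos : ∀ i j, 0 ≤ A⁻¹ i j) :
    ∃ (σ : Equiv.Perm (Fin n)) (d : Fin n → ℝ), (∀ i, 0 < d i) ∧
      A = Matrix.diagonal d *
        Matrix.of (fun i j => if j = σ i then (1 : ℝ) else 0) :=
  stmt1_general n A hA hApos hAinvpos
end

section
/- Let E be the additive subgroup of ℝ generated by the real numbers 1/(2^{2n+1}·P_n) + 3/(4^n·Q_n·π²) and 1/(2^{2n+1}·P_n) − 3/(4^n·Q_n·π²) for n ranging over the natural numbers (including n = 0). Then for every integer m, 2^m·E = E (i.e. {2^m·x : x ∈ E} = E). -/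
/-- `P n = ∏_{k=1}^{n} p_k²` where `p_1 < p_2 < …` are the primes (`Nat.nth Nat.Prime` is
the 0-indexed enumeration of the primes, so `Nat.nth Nat.Prime 0 = 2`). -/
noncomputable def Pprod (n : ℕ) : ℝ :=
  ∏ k ∈ Finset.range n, (Nat.nth Nat.Prime k : ℝ) ^ 2

/-- `Q n = ∏_{k=1}^{n} (p_k² - 1)`. -/
noncomputable def Qprod (n : ℕ) : ℝ :=
  ∏ k ∈ Finset.range n, ((Nat.nth Nat.Prime k : ℝ) ^ 2 - 1)

/-- The additive subgroup of `ℝ` generated by the numbers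
`1/(2^{2n+1}·P_n) ± 3/(4^n·Q_n·π²)` for `n : ℕ`. -/
noncomputable def genE : AddSubgroup ℝ :=
  AddSubgroup.closure
    {x : ℝ | ∃ n : ℕ,
      x = 1 / (2 ^ (2 * n + 1) * Pprod n) + 3 / (4 ^ n * Qprod n * Real.pi ^ 2) ∨
      x = 1 / (2 ^ (2 * n + 1) * Pprod n) - 3 / (4 ^ n * Qprod n * Real.pi ^ 2)}


/-!
Write `a n = 1 / (2^(2n+1) P_n)` and `b n = 3 / (4^n Q_n π²)`, so that `E` is generated by
the `a n ± b n`. With `p = p_{n+1}` one has `a n = 4 p² a (n+1)` and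
`b n = 4 (p² - 1) b (n+1)`, hence
`(a n ± b n) / 2 = (2p² - 1) (a (n+1) ± b (n+1)) + (a (n+1) ∓ b (n+1))`,
an integer combination of generators. So `E` is closed under halving, and trivially under
doubling, which gives `2^m E = E`.
-/

open Real

section ZpowStable

variable {K : Type*} [Field K] {G : AddSubgroup K} {c : ℤ}

theorem AddSubgroup.zpow_mul_mem_of_forall_div_mem (hc : (c : K) ≠ 0)
    (hG : ∀ x ∈ G, x / c ∈ G) (m : ℤ) {x : K} (hx : x ∈ G) : (c : K) ^ m * x ∈ G := by
  induction m using Int.induction_on with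
  | zero => simpa using hx
  | succ k ih =>
    rw [zpow_add_one₀ hc, mul_comm _ (c : K), mul_assoc, ← zsmul_eq_mul]
    exact G.zsmul_mem ih c
  | pred k ih =>
    rw [zpow_sub_one₀ hc, mul_right_comm, ← div_eq_mul_inv]
    exact hG _ ih

theorem AddSubgroup.image_zpow_mul_eq_of_forall_div_mem (hc : (c : K) ≠ 0)
    (hG : ∀ x ∈ G, x / c ∈ G) (m : ℤ) :
    (fun x => (c : K) ^ m * x) '' (G : Set K) = G := by
  refine subset_antisymm ?_ fun y hy => ⟨(c : K) ^ (-m) * y, ?_, ?_⟩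
  · rintro _ ⟨x, hx, rfl⟩
    exact G.zpow_mul_mem_of_forall_div_mem hc hG m hx
  · exact G.zpow_mul_mem_of_forall_div_mem hc hG (-m) hy
  · dsimp only
    rw [← mul_assoc, ← zpow_add₀ hc, add_neg_cancel, zpow_zero, one_mul]

end ZpowStable

theorem add_eq_two_mul_of_eq_mul {R : Type*} [CommRing R] {a b a' b' q : R}
    (ha : a = 4 * q * a') (hb : b = 4 * (q - 1) * b') :
    a + b = 2 * ((2 * q - 1) * (a' + b') + (a' - b')) ∧
      a - b = 2 * ((2 * q - 1) * (a' - b') + (a' + b')) := by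
  subst ha hb
  constructor <;> ring

noncomputable def pTerm (n : ℕ) : ℝ := 1 / (2 ^ (2 * n + 1) * Pprod n)

noncomputable def qTerm (n : ℕ) : ℝ := 3 / (4 ^ n * Qprod n * π ^ 2)

theorem Pprod_succ (n : ℕ) : Pprod (n + 1) = Pprod n * (Nat.nth Nat.Prime n : ℝ) ^ 2 :=
  Finset.prod_range_succ _ n

theorem Qprod_succ (n : ℕ) : Qprod (n + 1) = Qprod n * ((Nat.nth Nat.Prime n : ℝ) ^ 2 - 1) :=
  Finset.prod_range_succ _ n

theorem pTerm_eq_mul_succ (n : ℕ) :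
    pTerm n = 4 * (Nat.nth Nat.Prime n : ℝ) ^ 2 * pTerm (n + 1) := by
  have hp : (Nat.nth Nat.Prime n : ℝ) ≠ 0 := by exact_mod_cast (Nat.prime_nth_prime n).ne_zero
  rw [pTerm, pTerm, Pprod_succ]
  field_simp
  ring

theorem qTerm_eq_mul_succ (n : ℕ) :
    qTerm n = 4 * ((Nat.nth Nat.Prime n : ℝ) ^ 2 - 1) * qTerm (n + 1) := by
  have hp : (Nat.nth Nat.Prime n : ℝ) ^ 2 - 1 ≠ 0 := by
    have : 2 ≤ Nat.nth Nat.Prime n := (Nat.prime_nth_prime n).two_le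
    rw [sub_ne_zero]
    exact_mod_cast (Nat.one_lt_pow two_ne_zero this).ne'
  rw [qTerm, qTerm, Qprod_succ]
  field_simp
  ring

theorem genE_eq_closure :
    genE = AddSubgroup.closure {x | ∃ n, x = pTerm n + qTerm n ∨ x = pTerm n - qTerm n} := rfl

theorem div_two_mem_genE {x : ℝ} (hx : x ∈ genE) : x / 2 ∈ genE := by
  suffices genE.map (AddMonoidHom.mulRight (2⁻¹ : ℝ)) ≤ genE by
    exact this ⟨x, hx, (div_eq_mul_inv x 2).symm⟩
  have mem {y : ℝ} (n : ℕ) (hy : y = pTerm n + qTerm n ∨ y = pTerm n - qTerm n) :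
      y ∈ genE :=
    AddSubgroup.subset_closure ⟨n, hy⟩
  have int_mul_mem (k : ℤ) {y : ℝ} (hy : y ∈ genE) : (k : ℝ) * y ∈ genE := by
    simpa only [zsmul_eq_mul] using genE.zsmul_mem hy k
  rw [genE_eq_closure, AddMonoidHom.map_closure, AddSubgroup.closure_le]
  rintro _ ⟨_, ⟨n, hn⟩, rfl⟩
  obtain ⟨hadd, hsub⟩ := add_eq_two_mul_of_eq_mul (pTerm_eq_mul_succ n) (qTerm_eq_mul_succ n)
  have hcoeff : 2 * (Nat.nth Nat.Prime n : ℝ) ^ 2 - 1 =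
      ((2 * Nat.nth Nat.Prime n ^ 2 - 1 : ℤ) : ℝ) := by
    push_cast; ring
  rw [AddMonoidHom.mulRight_apply, ← div_eq_mul_inv]
  rcases hn with rfl | rfl
  · rw [hadd, hcoeff, mul_div_cancel_left₀ _ two_ne_zero]
    exact add_mem (int_mul_mem _ (mem (n + 1) (.inl rfl))) (mem (n + 1) (.inr rfl))
  · rw [hsub, hcoeff, mul_div_cancel_left₀ _ two_ne_zero]
    exact add_mem (int_mul_mem _ (mem (n + 1) (.inr rfl))) (mem (n + 1) (.inl rfl))

/-- For every integer `m`, `2^m · E = E`. -/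
theorem stmt3 (m : ℤ) :
    (fun x => (2 : ℝ) ^ m * x) '' (genE : Set ℝ) = (genE : Set ℝ) :=
  genE.image_zpow_mul_eq_of_forall_div_mem (c := 2) two_ne_zero (fun _ => div_two_mem_genE) m
end

section
/- Let A be a simple unital C*-algebra, let n ≥ 2, let φ₁, …, φₙ be nonzero positive bounded traces on A, and let u₁, …, uₙ ∈ A be a dual system, i.e. φᵢ(uⱼ) = δᵢⱼ for all i, j. Then no uⱼ is a positive element of A (for each j it is not the case that 0 ≤ uⱼ). -/
/-!
Fix `j` and a trace `ψ = φ i` with `i ≠ j`. If `u j = a⋆a`, then `ψ (a⋆a) = ψ (u j) = 0`, and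
the Cauchy–Schwarz inequality for the positive sesquilinear form `(x, y) ↦ ψ (x⋆y)` gives
`ψ (w * a) = 0` for every `w`. For a trace, `{x | ∀ w, ψ (w * x) = 0}` is a closed two-sided
ideal; it contains `a`, and it is proper because `ψ ≠ 0`. Simplicity forces it to vanish,
so `a = 0` and `u j = 0`, contradicting `φ j (u j) = 1`.
-/

open scoped ComplexOrder

section PositiveFunctional

variable {A F : Type*} [Ring A] [StarRing A] [Algebra ℂ A] [StarModule ℂ A]
  [FunLike F A ℂ] [LinearMapClass F ℂ A ℂ] {φ : F}

/-- Polarization: `φ (z⋆z)` is real for `z = x + y` and for `z = i • x + y`. -/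
theorem map_star_mul_comm_eq_conj (hφ : ∀ a : A, 0 ≤ φ (star a * a)) (x y : A) :
    φ (star y * x) = starRingEnd ℂ (φ (star x * y)) := by
  have him : ∀ a : A, (φ (star a * a)).im = 0 := fun a ↦ ((Complex.nonneg_iff.mp (hφ a)).2).symm
  have hsum : φ (star (x + y) * (x + y)) =
      φ (star x * x) + φ (star x * y) + φ (star y * x) + φ (star y * y) := by
    simp only [star_add, add_mul, mul_add, map_add]
    ring
  have hsum_I : φ (star (Complex.I • x + y) * (Complex.I • x + y)) =
      φ (star x * x) - Complex.I * φ (star x * y) + Complex.I * φ (star y * x)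
        + φ (star y * y) := by
    simp only [star_add, star_smul, add_mul, mul_add, smul_mul_assoc, mul_smul_comm, map_add,
      map_smul, smul_eq_mul, RCLike.star_def, Complex.conj_I]
    ring_nf
    simp only [Complex.I_sq]
    ring
  have h₁ := congrArg Complex.im hsum
  have h₂ := congrArg Complex.im hsum_I
  simp only [him, Complex.add_im, Complex.sub_im, Complex.mul_im, Complex.I_re,
    Complex.I_im] at h₁ h₂
  apply Complex.ext <;> simp only [Complex.conj_re, Complex.conj_im] <;> linarith

variable (φ) in
noncomputable abbrev positiveFunctionalCore (hφ : ∀ a : A, 0 ≤ φ (star a * a)) :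
    PreInnerProductSpace.Core ℂ A where
  inner x y := φ (star x * y)
  conj_inner_symm x y := (map_star_mul_comm_eq_conj hφ y x).symm
  re_inner_nonneg x := (Complex.nonneg_iff.mp (hφ x)).1
  add_left x y z := by simp only [star_add, add_mul, map_add]
  smul_left x y r := by
    simp only [star_smul, smul_mul_assoc, map_smul, smul_eq_mul, RCLike.star_def]

theorem map_mul_eq_zero_of_map_star_mul_self_eq_zero (hφ : ∀ a : A, 0 ≤ φ (star a * a))
    {x : A} (hx : φ (star x * x) = 0) (w : A) : φ (w * x) = 0 := by
  let _ := positiveFunctionalCore φ hφ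
  have hcs : ‖φ (star x * star w)‖ * ‖φ (star (star w) * x)‖ ≤
      (φ (star x * x)).re * (φ (star (star w) * star w)).re :=
    InnerProductSpace.Core.inner_mul_inner_self_le (𝕜 := ℂ) x (star w)
  rw [map_star_mul_comm_eq_conj hφ x, RCLike.norm_conj, hx, Complex.zero_re, zero_mul] at hcs
  have hzero : φ (star x * star w) = 0 :=
    norm_eq_zero.1 (mul_self_eq_zero.1 (hcs.antisymm (mul_self_nonneg _)))
  rw [← star_star w, map_star_mul_comm_eq_conj hφ, hzero, map_zero]

end PositiveFunctional

section TraceIdeal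

variable {A M F : Type*} [Ring A] [AddCommGroup M] [FunLike F A M] [AddMonoidHomClass F A M]
  {φ : F}

variable (φ) in
/-- For a trace `φ`, the largest two-sided ideal contained in `ker φ`. -/
def traceNullIdeal (htr : ∀ a b : A, φ (a * b) = φ (b * a)) : TwoSidedIdeal A :=
  .mk' {x | ∀ w, φ (w * x) = 0}
    (fun w ↦ by simp)
    (fun hx hy w ↦ by simp [mul_add, hx w, hy w])
    (fun hx w ↦ by simp [hx w])
    (fun {y x} hx w ↦ by simpa [mul_assoc] using hx (w * y))
    (fun {x y} hx w ↦ by rw [← mul_assoc, htr, ← mul_assoc, hx])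

theorem mem_traceNullIdeal {htr : ∀ a b : A, φ (a * b) = φ (b * a)} {x : A} :
    x ∈ traceNullIdeal φ htr ↔ ∀ w, φ (w * x) = 0 :=
  TwoSidedIdeal.mem_mk' ..

theorem isClosed_traceNullIdeal [TopologicalSpace A] [ContinuousMul A] [TopologicalSpace M]
    [T1Space M] (htr : ∀ a b : A, φ (a * b) = φ (b * a)) (hcont : Continuous φ) :
    IsClosed (traceNullIdeal φ htr : Set A) := by
  rw [traceNullIdeal, TwoSidedIdeal.coe_mk', Set.ofPred_forall]
  exact isClosed_iInter fun w ↦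
    isClosed_singleton.preimage (hcont.comp (continuous_const.mul continuous_id))

end TraceIdeal

theorem eq_zero_of_map_star_mul_self_eq_zero {A : Type*} [Ring A] [TopologicalSpace A]
    [ContinuousMul A] [StarRing A] [Algebra ℂ A] [StarModule ℂ A]
    (hsimple : ∀ I : TwoSidedIdeal A, IsClosed (I : Set A) →
      (I : Set A) = {0} ∨ (I : Set A) = Set.univ)
    {φ : A →L[ℂ] ℂ} (hφ₀ : φ ≠ 0) (htr : ∀ a b : A, φ (a * b) = φ (b * a))
    (hφ : ∀ a : A, 0 ≤ φ (star a * a)) {a : A} (ha : φ (star a * a) = 0) : a = 0 := by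
  have ha_mem : a ∈ traceNullIdeal φ htr :=
    mem_traceNullIdeal.2 (map_mul_eq_zero_of_map_star_mul_self_eq_zero hφ ha)
  rcases hsimple _ (isClosed_traceNullIdeal htr φ.continuous) with h | h
  · exact h.subset ha_mem
  · refine absurd (ContinuousLinearMap.ext fun c ↦ ?_) hφ₀
    simpa using mem_traceNullIdeal.1 (h.superset (Set.mem_univ 1)) c

theorem stmt10_general {A : Type*} [NormedRing A] [StarRing A]
    [NormedAlgebra ℂ A] [StarModule ℂ A]
    (hsimple : ∀ I : TwoSidedIdeal A, IsClosed (I : Set A) →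
      (I : Set A) = {0} ∨ (I : Set A) = Set.univ)
    (n : ℕ) (hn : 2 ≤ n) (φ : Fin n → (A →L[ℂ] ℂ))
    (hne : ∀ i, φ i ≠ 0)
    (htrace : ∀ i, ∀ a b : A, φ i (a * b) = φ i (b * a))
    (hpos : ∀ i, ∀ a : A, 0 ≤ φ i (star a * a))
    (u : Fin n → A)
    (hdual : ∀ i j, φ i (u j) = if i = j then 1 else 0) :
    ∀ j, ¬ ∃ a : A, u j = star a * a := by
  rintro j ⟨a, ha⟩
  obtain ⟨i, hij⟩ : ∃ i, i ≠ j :=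
    Fintype.exists_ne_of_one_lt_card (by rw [Fintype.card_fin]; omega) j
  have ha₀ : a = 0 := eq_zero_of_map_star_mul_self_eq_zero hsimple (hne i) (htrace i) (hpos i)
    (by rw [← ha, hdual, if_neg hij])
  simpa [ha, ha₀] using hdual j j

/-- Let `A` be a simple unital C*-algebra, `n ≥ 2`, `φ₁, …, φₙ` nonzero positive bounded
traces on `A`, and `u₁, …, uₙ` a dual system (`φ i (u j) = δᵢⱼ`). Then no `u j` is a
positive element of `A`, i.e. no `u j` is of the form `star a * a`. -/
theorem stmt10 {A : Type*} [NormedRing A] [StarRing A] [CStarRing A]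
    [NormedAlgebra ℂ A] [StarModule ℂ A] [CompleteSpace A]
    (hsimple : ∀ I : TwoSidedIdeal A, IsClosed (I : Set A) →
      (I : Set A) = {0} ∨ (I : Set A) = Set.univ)
    (n : ℕ) (hn : 2 ≤ n) (φ : Fin n → (A →L[ℂ] ℂ))
    (hne : ∀ i, φ i ≠ 0)
    (htrace : ∀ i, ∀ a b : A, φ i (a * b) = φ i (b * a))
    (hpos : ∀ i, ∀ a : A, 0 ≤ φ i (star a * a))
    (u : Fin n → A)
    (hdual : ∀ i j, φ i (u j) = if i = j then 1 else 0) :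
    ∀ j, ¬ ∃ a : A, u j = star a * a :=
  stmt10_general hsimple n hn φ hne htrace hpos u hdual
end
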